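/- arXiv:1109.6523 — 3 statements merged into one kernel-verified Lean document; each statement's English description precedes it below -/
import Mathlib

section
/- For all indices p, q ∈ {1,…,m}, every smooth V : U → ℝ^ν, and every index m' ∈ {1,…,ν}, the commutator of pullback covariant derivatives is given by the pullback of the curvature of Γ: (D_p D_q V − D_q D_p V)^{m'} = Σ_{j,ℓ,s} (∂φ^j/∂u^p)(∂φ^ℓ/∂u^q) V^s (R^{m'}_{jℓs} ∘ φ), where R^{m'}_{ℓkj} := ∂Γ^{m'}_{kj}/∂y^ℓ − ∂Γ^{m'}_{ℓj}/∂y^k + Σ_i (Γ^i_{kj} Γ^{m'}_{ℓi} − Γ^i_{ℓj} Γ^{m'}_{ki}). -/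
open Finset

/-- Partial derivative along the coordinate direction `r`. -/
noncomputable def cd (m : ℕ) (r : Fin m) (u : (Fin m → ℝ) → ℝ) (x : Fin m → ℝ) : ℝ :=
  fderiv ℝ u x (Pi.single r 1)

/-- Pullback covariant derivative along the coordinate direction `∂/∂u^r`:
`(D_r V)^i = ∂V^i/∂u^r + Σ_{j,k} (∂φ^j/∂u^r) V^k (Γ^i_{jk}∘φ)`. -/
noncomputable def Dcoord (m ν : ℕ) (φ : (Fin m → ℝ) → Fin ν → ℝ)
    (Γ : Fin ν → Fin ν → Fin ν → (Fin ν → ℝ) → ℝ) (r : Fin m)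
    (V : (Fin m → ℝ) → Fin ν → ℝ) (x : Fin m → ℝ) (i : Fin ν) : ℝ :=
  cd m r (fun q => V q i) x
    + ∑ j, ∑ k, cd m r (fun q => φ q j) x * V x k * Γ i j k (φ x)

/-- Curvature of `Γ`:
`R^{m'}_{ℓkj} = ∂Γ^{m'}_{kj}/∂y^ℓ − ∂Γ^{m'}_{ℓj}/∂y^k + Σ_i (Γ^i_{kj} Γ^{m'}_{ℓi} − Γ^i_{ℓj} Γ^{m'}_{ki})`. -/
noncomputable def Rcurv (ν : ℕ) (Γ : Fin ν → Fin ν → Fin ν → (Fin ν → ℝ) → ℝ)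
    (m' ℓ k j : Fin ν) (y : Fin ν → ℝ) : ℝ :=
  fderiv ℝ (Γ m' k j) y (Pi.single ℓ 1) - fderiv ℝ (Γ m' ℓ j) y (Pi.single k 1)
    + ∑ i, (Γ i k j y * Γ m' ℓ i y - Γ i ℓ j y * Γ m' k i y)

section helpers
variable {m ν : ℕ} {U : Set (Fin m → ℝ)} {x : Fin m → ℝ}

lemma cd_add {f g : (Fin m → ℝ) → ℝ} (hf : DifferentiableAt ℝ f x)
    (hg : DifferentiableAt ℝ g x) (r : Fin m) :
    cd m r (fun w => f w + g w) x = cd m r f x + cd m r g x := by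
  unfold cd
  rw [fderiv_fun_add hf hg]; rfl

lemma cd_sum {ι : Type*} (s : Finset ι) (f : ι → (Fin m → ℝ) → ℝ)
    (h : ∀ i ∈ s, DifferentiableAt ℝ (f i) x) (r : Fin m) :
    cd m r (fun w => ∑ i ∈ s, f i w) x = ∑ i ∈ s, cd m r (f i) x := by
  unfold cd
  rw [fderiv_fun_sum h]; simp

lemma cd_mul {f g : (Fin m → ℝ) → ℝ} (hf : DifferentiableAt ℝ f x)
    (hg : DifferentiableAt ℝ g x) (r : Fin m) :
    cd m r (fun w => f w * g w) x = cd m r f x * g x + f x * cd m r g x := by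
  unfold cd
  rw [fderiv_fun_mul hf hg]; simp [mul_comm]; ring

lemma fderiv_apply_eq_sum {ν : ℕ} (g : (Fin ν → ℝ) → ℝ) (y : Fin ν → ℝ) (v : Fin ν → ℝ) :
    fderiv ℝ g y v = ∑ ℓ, v ℓ * fderiv ℝ g y (Pi.single ℓ 1) := by
  have hv : v = ∑ ℓ, v ℓ • (Pi.single ℓ (1:ℝ) : Fin ν → ℝ) := by
    ext i
    simp [Finset.sum_apply, Pi.single_apply]
  conv_lhs => rw [hv]
  rw [map_sum]
  simp

lemma cd_comp {φ : (Fin m → ℝ) → Fin ν → ℝ} (g : (Fin ν → ℝ) → ℝ)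
    (hg : DifferentiableAt ℝ g (φ x)) (hφ : DifferentiableAt ℝ φ x) (r : Fin m) :
    cd m r (fun w => g (φ w)) x
      = ∑ ℓ, cd m r (fun w => φ w ℓ) x * fderiv ℝ g (φ x) (Pi.single ℓ 1) := by
  unfold cd
  have hcomp : fderiv ℝ (fun w => g (φ w)) x = (fderiv ℝ g (φ x)).comp (fderiv ℝ φ x) :=
    fderiv_comp x hg hφ
  rw [hcomp]
  have hφi : ∀ i, DifferentiableAt ℝ (fun w => φ w i) x := fun i => (differentiableAt_pi.mp hφ) i
  simp only [ContinuousLinearMap.comp_apply]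
  rw [fderiv_apply_eq_sum]
  refine Finset.sum_congr rfl fun ℓ _ => ?_
  congr 1
  rw [fderiv_pi hφi]
  simp

lemma cd_swap (hU : IsOpen U) {f : (Fin m → ℝ) → ℝ} (hf : ContDiffOn ℝ (⊤ : ℕ∞) f U)
    (hx : x ∈ U) (p q : Fin m) :
    cd m p (fun w => cd m q f w) x = cd m q (fun w => cd m p f w) x := by
  have hfa : ContDiffAt ℝ (⊤ : ℕ∞) f x := hf.contDiffAt (hU.mem_nhds hx)
  have hd : DifferentiableAt ℝ (fderiv ℝ f) x :=
    (hfa.fderiv_right (m := 1) (WithTop.coe_le_coe.mpr le_top)).differentiableAt one_ne_zero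
  have hsymm := hfa.isSymmSndFDerivAt (by rw [minSmoothness_of_isRCLikeNormedField]; exact WithTop.coe_le_coe.mpr le_top)
  unfold cd
  rw [fderiv_clm_apply hd (differentiableAt_const _),
      fderiv_clm_apply hd (differentiableAt_const _)]
  simp [hsymm (Pi.single p 1) (Pi.single q 1)]

lemma contDiffOn_cd (hU : IsOpen U) {f : (Fin m → ℝ) → ℝ} (hf : ContDiffOn ℝ (⊤ : ℕ∞) f U)
    (r : Fin m) : ContDiffOn ℝ (⊤ : ℕ∞) (fun w => cd m r f w) U := by
  unfold cd
  exact (hf.fderiv_of_isOpen hU (by simp)).clm_apply contDiffOn_const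

lemma diffAt_of_contDiffOn (hU : IsOpen U) {f : (Fin m → ℝ) → ℝ} (hf : ContDiffOn ℝ (⊤ : ℕ∞) f U)
    (hx : x ∈ U) : DifferentiableAt ℝ f x :=
  (hf.contDiffAt (hU.mem_nhds hx)).differentiableAt (by simp)

lemma rot3 {ν : ℕ} (f : Fin ν → Fin ν → Fin ν → ℝ) :
    ∑ a, ∑ b, ∑ c, f a b c = ∑ b, ∑ c, ∑ a, f a b c := by
  rw [Finset.sum_comm]
  exact Finset.sum_congr rfl fun b _ => Finset.sum_comm

lemma alg {ν : ℕ} (P Q W : Fin ν → ℝ) (G : Fin ν → Fin ν → Fin ν → ℝ)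
    (dG : Fin ν → Fin ν → Fin ν → Fin ν → ℝ) (m' : Fin ν) :
    (∑ j, ∑ k, Q j * W k * ∑ ℓ, P ℓ * dG m' j k ℓ)
      + (∑ j, ∑ k, P j * (∑ ℓ, ∑ s, Q ℓ * W s * G k ℓ s) * G m' j k)
      - ((∑ j, ∑ k, P j * W k * ∑ ℓ, Q ℓ * dG m' j k ℓ)
        + (∑ j, ∑ k, Q j * (∑ ℓ, ∑ s, P ℓ * W s * G k ℓ s) * G m' j k))
    = ∑ j, ∑ ℓ, ∑ s, P j * Q ℓ * W s *
        (dG m' ℓ s j - dG m' j s ℓ + ∑ i, (G i ℓ s * G m' j i - G i j s * G m' ℓ i)) := by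
  have e1 : (∑ j, ∑ k, Q j * W k * ∑ ℓ, P ℓ * dG m' j k ℓ)
      = ∑ a, ∑ b, ∑ c, P a * Q b * W c * dG m' b c a := by
    rw [rot3 (fun a b c => P a * Q b * W c * dG m' b c a)]
    refine Finset.sum_congr rfl fun b _ => Finset.sum_congr rfl fun c _ => ?_
    rw [Finset.mul_sum]
    exact Finset.sum_congr rfl fun a _ => by ring
  have e2 : (∑ j, ∑ k, P j * W k * ∑ ℓ, Q ℓ * dG m' j k ℓ)
      = ∑ a, ∑ b, ∑ c, P a * Q b * W c * dG m' a c b := by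
    simp only [Finset.mul_sum]
    refine Finset.sum_congr rfl fun a _ => ?_
    rw [Finset.sum_comm]
    exact Finset.sum_congr rfl fun b _ => Finset.sum_congr rfl fun c _ => by ring
  have e3g : ∀ A B : Fin ν → ℝ,
      (∑ j, ∑ k, A j * (∑ ℓ, ∑ s, B ℓ * W s * G k ℓ s) * G m' j k)
      = ∑ a, ∑ b, ∑ c, ∑ i, A a * B b * W c * (G i b c * G m' a i) := by
    intro A B
    simp only [Finset.mul_sum, Finset.sum_mul]
    refine Finset.sum_congr rfl fun a _ => ?_
    rw [rot3 (fun k ℓ s => A a * (B ℓ * W s * G k ℓ s) * G m' a k)]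
    exact Finset.sum_congr rfl fun b _ => Finset.sum_congr rfl fun c _ =>
      Finset.sum_congr rfl fun i _ => by ring
  have e4 : (∑ j, ∑ k, Q j * (∑ ℓ, ∑ s, P ℓ * W s * G k ℓ s) * G m' j k)
      = ∑ a, ∑ b, ∑ c, ∑ i, P a * Q b * W c * (G i a c * G m' b i) := by
    rw [e3g Q P, Finset.sum_comm]
    exact Finset.sum_congr rfl fun a _ => Finset.sum_congr rfl fun b _ =>
      Finset.sum_congr rfl fun c _ => Finset.sum_congr rfl fun i _ => by ring
  rw [e1, e2, e3g P Q, e4]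
  simp only [mul_add, mul_sub, Finset.mul_sum, Finset.sum_add_distrib, Finset.sum_sub_distrib]
  ring

end helpers

theorem pullback_covariant_derivative_commutator (m ν : ℕ)
    (U : Set (Fin m → ℝ)) (hU : IsOpen U)
    (φ : (Fin m → ℝ) → Fin ν → ℝ) (hφ : ContDiffOn ℝ (⊤ : ℕ∞) φ U)
    (Γ : Fin ν → Fin ν → Fin ν → (Fin ν → ℝ) → ℝ)
    (hΓ : ∀ i j k, ContDiff ℝ (⊤ : ℕ∞) (Γ i j k))
    (V : (Fin m → ℝ) → Fin ν → ℝ) (hV : ContDiffOn ℝ (⊤ : ℕ∞) V U)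
    (p q : Fin m) (x : Fin m → ℝ) (hx : x ∈ U) (m' : Fin ν) :
    Dcoord m ν φ Γ p (Dcoord m ν φ Γ q V) x m'
        - Dcoord m ν φ Γ q (Dcoord m ν φ Γ p V) x m'
      = ∑ j, ∑ ℓ, ∑ s,
          cd m p (fun w => φ w j) x * cd m q (fun w => φ w ℓ) x * V x s
            * Rcurv ν Γ m' j ℓ s (φ x) := by
  have hφi : ∀ i, ContDiffOn ℝ (⊤ : ℕ∞) (fun w => φ w i) U := fun i => (contDiffOn_pi.mp hφ) i
  have hVi : ∀ i, ContDiffOn ℝ (⊤ : ℕ∞) (fun w => V w i) U := fun i => (contDiffOn_pi.mp hV) i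
  have dφfull : DifferentiableAt ℝ φ x :=
    (hφ.contDiffAt (hU.mem_nhds hx)).differentiableAt (by simp)
  have dφ : ∀ i, DifferentiableAt ℝ (fun w => φ w i) x :=
    fun i => diffAt_of_contDiffOn hU (hφi i) hx
  have dV : ∀ k, DifferentiableAt ℝ (fun w => V w k) x :=
    fun k => diffAt_of_contDiffOn hU (hVi k) hx
  have dΓφ : ∀ i j k, DifferentiableAt ℝ (fun w => Γ i j k (φ w)) x :=
    fun i j k => DifferentiableAt.comp x (((hΓ i j k).differentiable (by simp)) (φ x)) dφfull
  have dcdφ : ∀ (r : Fin m) (j : Fin ν),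
      DifferentiableAt ℝ (fun w => cd m r (fun z => φ z j) w) x :=
    fun r j => diffAt_of_contDiffOn hU (contDiffOn_cd hU (hφi j) r) hx
  have dcdV : ∀ (r : Fin m) (k : Fin ν),
      DifferentiableAt ℝ (fun w => cd m r (fun z => V z k) w) x :=
    fun r k => diffAt_of_contDiffOn hU (contDiffOn_cd hU (hVi k) r) hx
  have key : ∀ a b : Fin m,
      Dcoord m ν φ Γ a (Dcoord m ν φ Γ b V) x m'
      = cd m a (fun w => cd m b (fun z => V z m') w) x
        + (∑ j, ∑ k, cd m a (fun w => cd m b (fun z => φ z j) w) x * V x k * Γ m' j k (φ x))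
        + (∑ j, ∑ k, cd m b (fun z => φ z j) x * cd m a (fun z => V z k) x * Γ m' j k (φ x))
        + (∑ j, ∑ k, cd m b (fun z => φ z j) x * V x k
            * ∑ ℓ, cd m a (fun z => φ z ℓ) x * fderiv ℝ (Γ m' j k) (φ x) (Pi.single ℓ 1))
        + (∑ j, ∑ k, cd m a (fun z => φ z j) x * cd m b (fun z => V z k) x * Γ m' j k (φ x))
        + (∑ j, ∑ k, cd m a (fun z => φ z j) x
            * (∑ ℓ, ∑ s, cd m b (fun z => φ z ℓ) x * V x s * Γ k ℓ s (φ x))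
            * Γ m' j k (φ x)) := by
    intro a b
    have dsummand : ∀ j k : Fin ν,
        DifferentiableAt ℝ (fun w => cd m b (fun z => φ z j) w * V w k * Γ m' j k (φ w)) x :=
      fun j k => ((dcdφ b j).mul (dV k)).mul (dΓφ m' j k)
    have dS : DifferentiableAt ℝ
        (fun w => ∑ j, ∑ k, cd m b (fun z => φ z j) w * V w k * Γ m' j k (φ w)) x := by
      refine DifferentiableAt.fun_sum fun j _ => DifferentiableAt.fun_sum fun k _ => dsummand j k
    have h0 : cd m a (fun w => cd m b (fun z => V z m') w
          + ∑ j, ∑ k, cd m b (fun z => φ z j) w * V w k * Γ m' j k (φ w)) x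
        = cd m a (fun w => cd m b (fun z => V z m') w) x
          + cd m a (fun w => ∑ j, ∑ k, cd m b (fun z => φ z j) w * V w k * Γ m' j k (φ w)) x :=
      cd_add (dcdV b m') dS a
    have h1 : cd m a (fun w => ∑ j, ∑ k, cd m b (fun z => φ z j) w * V w k * Γ m' j k (φ w)) x
        = ∑ j, cd m a (fun w => ∑ k, cd m b (fun z => φ z j) w * V w k * Γ m' j k (φ w)) x :=
      cd_sum Finset.univ _ (fun j _ => DifferentiableAt.fun_sum fun k _ => dsummand j k) a
    have h2 : ∀ j : Fin ν,
        cd m a (fun w => ∑ k, cd m b (fun z => φ z j) w * V w k * Γ m' j k (φ w)) x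
        = ∑ k, cd m a (fun w => cd m b (fun z => φ z j) w * V w k * Γ m' j k (φ w)) x :=
      fun j => cd_sum Finset.univ _ (fun k _ => dsummand j k) a
    have t2 : ∀ j k : Fin ν,
        cd m a (fun w => cd m b (fun z => φ z j) w * V w k * Γ m' j k (φ w)) x
        = cd m a (fun w => cd m b (fun z => φ z j) w) x * V x k * Γ m' j k (φ x)
          + cd m b (fun z => φ z j) x * cd m a (fun z => V z k) x * Γ m' j k (φ x)
          + cd m b (fun z => φ z j) x * V x k
            * ∑ ℓ, cd m a (fun z => φ z ℓ) x * fderiv ℝ (Γ m' j k) (φ x) (Pi.single ℓ 1) := by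
      intro j k
      have hmul1 : cd m a (fun w => cd m b (fun z => φ z j) w * V w k * Γ m' j k (φ w)) x
          = cd m a (fun w => cd m b (fun z => φ z j) w * V w k) x * Γ m' j k (φ x)
            + (cd m b (fun z => φ z j) x * V x k) * cd m a (fun w => Γ m' j k (φ w)) x :=
        cd_mul ((dcdφ b j).mul (dV k)) (dΓφ m' j k) a
      have hmul2 : cd m a (fun w => cd m b (fun z => φ z j) w * V w k) x
          = cd m a (fun w => cd m b (fun z => φ z j) w) x * V x k
            + cd m b (fun z => φ z j) x * cd m a (fun z => V z k) x :=
        cd_mul (dcdφ b j) (dV k) a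
      have hcomp : cd m a (fun w => Γ m' j k (φ w)) x
          = ∑ ℓ, cd m a (fun z => φ z ℓ) x * fderiv ℝ (Γ m' j k) (φ x) (Pi.single ℓ 1) :=
        cd_comp (Γ m' j k) (((hΓ m' j k).differentiable (by simp)) (φ x)) dφfull a
      rw [hmul1, hmul2, hcomp]
      ring
    show cd m a (fun w => Dcoord m ν φ Γ b V w m') x
        + ∑ j, ∑ k, cd m a (fun z => φ z j) x * Dcoord m ν φ Γ b V x k * Γ m' j k (φ x) = _
    simp only [Dcoord]
    rw [h0, h1]
    simp only [h2, t2]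
    simp only [Finset.sum_add_distrib, mul_add, add_mul]
    ring
  rw [key p q, key q p]
  have hA : cd m p (fun w => cd m q (fun z => V z m') w) x
      = cd m q (fun w => cd m p (fun z => V z m') w) x :=
    cd_swap hU (hVi m') hx p q
  have hB : (∑ j, ∑ k, cd m p (fun w => cd m q (fun z => φ z j) w) x * V x k * Γ m' j k (φ x))
      = ∑ j, ∑ k, cd m q (fun w => cd m p (fun z => φ z j) w) x * V x k * Γ m' j k (φ x) :=
    Finset.sum_congr rfl fun j _ => Finset.sum_congr rfl fun k _ => by
      rw [cd_swap hU (hφi j) hx p q]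
  have halg :
      (∑ j, ∑ k, cd m q (fun z => φ z j) x * V x k
          * ∑ ℓ, cd m p (fun z => φ z ℓ) x * fderiv ℝ (Γ m' j k) (φ x) (Pi.single ℓ 1))
        + (∑ j, ∑ k, cd m p (fun z => φ z j) x
            * (∑ ℓ, ∑ s, cd m q (fun z => φ z ℓ) x * V x s * Γ k ℓ s (φ x)) * Γ m' j k (φ x))
        - ((∑ j, ∑ k, cd m p (fun z => φ z j) x * V x k
            * ∑ ℓ, cd m q (fun z => φ z ℓ) x * fderiv ℝ (Γ m' j k) (φ x) (Pi.single ℓ 1))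
          + (∑ j, ∑ k, cd m q (fun z => φ z j) x
            * (∑ ℓ, ∑ s, cd m p (fun z => φ z ℓ) x * V x s * Γ k ℓ s (φ x)) * Γ m' j k (φ x)))
      = ∑ j, ∑ ℓ, ∑ s, cd m p (fun z => φ z j) x * cd m q (fun z => φ z ℓ) x * V x s *
          (fderiv ℝ (Γ m' ℓ s) (φ x) (Pi.single j 1) - fderiv ℝ (Γ m' j s) (φ x) (Pi.single ℓ 1)
            + ∑ i, (Γ i ℓ s (φ x) * Γ m' j i (φ x) - Γ i j s (φ x) * Γ m' ℓ i (φ x))) :=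
    alg (fun j => cd m p (fun z => φ z j) x) (fun ℓ => cd m q (fun z => φ z ℓ) x)
      (fun s => V x s) (fun i j k => Γ i j k (φ x))
      (fun a b c d => fderiv ℝ (Γ a b c) (φ x) (Pi.single d 1)) m'
  simp only [Rcurv]
  rw [hA, hB]
  linarith [halg]
end

section
/- The inverse entries of the Fefferman-type matrix F recover the inverse Levi matrix: Σ_{A,B=0}^{2n} F^{AB} λ^α_A λ^{β̄}_B = g^{αβ̄} for all 1 ≤ α, β ≤ n, where (g^{αβ̄}) is the unique family of complex numbers with Σ_{β=1}^{n} g^{αβ̄} g_{γβ̄} = δ^α_γ for all α, γ; moreover Σ_{A,B=0}^{2n} F^{AB} λ^α_A λ^β_B = 0 for all 1 ≤ α, β ≤ n. -/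
open scoped Matrix

/-- Column index type for the matrix `λ`: the symbol `0`, the holomorphic symbols `α`
(`1 ≤ α ≤ n`) and the antiholomorphic symbols `ᾱ` (`1 ≤ α ≤ n`). -/
abbrev FefCol (n : ℕ) := Unit ⊕ Fin n ⊕ Fin n

/-- The column symbol `0`. -/
def col0 {n : ℕ} : FefCol n := Sum.inl ()

/-- The column symbol `α`. -/
def colH {n : ℕ} (α : Fin n) : FefCol n := Sum.inr (Sum.inl α)

/-- The column symbol `ᾱ`. -/
def colA {n : ℕ} (α : Fin n) : FefCol n := Sum.inr (Sum.inr α)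

/-!
Instead of inverting `F`, solve one linear system. Let `ν` be the covector with
`ν λ = (0, 0, g^{α·})`; it exists because `λ` is invertible. In `ν F₁₁` the terms with `λ^0` and
`λ^γ` pair to zero against `ν`, so `ν F₁₁ = λ^α + (ν·σ) λ^0`, and the border column of `F`
removes the `λ^0` term: the covector `w = (ν, -(n+2) ν·σ)` satisfies `w F = (λ^α, 0)`.
Hence `(λ^α, 0) F⁻¹ = w`, and pairing with `(λ^q, 0)` gives `ν λ^q`, which is `g^{αβ̄}` for
`q = β̄` and `0` for `q = β`.
-/

open Matrix

theorem Matrix.sum_sum_castSucc_mul_eq_sum_snoc_vecMul {R : Type*} [CommSemiring R] {m : ℕ}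
    (M : Matrix (Fin (m + 1)) (Fin (m + 1)) R) (u v : Fin m → R) :
    ∑ A, ∑ B, M A.castSucc B.castSucc * u A * v B
      = ∑ B, (Fin.snoc (α := fun _ => R) u 0 ᵥ* M) B.castSucc * v B := by
  simp only [vecMul, dotProduct, Fin.sum_univ_castSucc, Fin.snoc_castSucc, Fin.snoc_last,
    zero_mul, add_zero, Finset.sum_mul]
  rw [Finset.sum_comm]
  exact Finset.sum_congr rfl fun _ _ => Finset.sum_congr rfl fun _ _ => by ring

theorem Matrix.vecMul_inv_eq_of_vecMul_eq {K m : Type*} [CommRing K] [Fintype m] [DecidableEq m]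
    {M : Matrix m m K} (hM : IsUnit M) {u w : m → K} (h : w ᵥ* M = u) : u ᵥ* M⁻¹ = w := by
  rw [← h, vecMul_vecMul, mul_nonsing_inv _ ((isUnit_iff_isUnit_det M).mp hM), vecMul_one]

section
variable {n : ℕ} {g ginv : Matrix (Fin n) (Fin n) ℂ} {lam : Matrix (Fin (2*n+1)) (FefCol n) ℂ}
  {σ ν : Fin (2*n+1) → ℂ} {α : Fin n}

theorem sum_mul_fefferman_entry_eq
    (hginv : ∀ α γ : Fin n, (∑ β, ginv α β * g γ β) = if α = γ then 1 else 0)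
    (hν : ν ᵥ* lam = Sum.elim (0 : Unit → ℂ) (Sum.elim (0 : Fin n → ℂ) (ginv α)))
    (B : Fin (2*n+1)) :
    ∑ A, ν A * ((∑ γ, ∑ δ, g γ δ * (lam A (colH γ) * lam B (colA δ)
          + lam B (colH γ) * lam A (colA δ))) + lam A col0 * σ B + lam B col0 * σ A)
      = lam B (colH α) + lam B col0 * (ν ⬝ᵥ σ) := by
  have h0 : ∑ A, ν A * lam A col0 = 0 := congrFun hν col0
  have hH : ∀ γ, ∑ A, ν A * lam A (colH γ) = 0 := fun γ => congrFun hν (colH γ)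
  have hA : ∀ δ, ∑ A, ν A * lam A (colA δ) = ginv α δ := fun δ => congrFun hν (colA δ)
  have hS : ∑ A, ν A * ∑ γ, ∑ δ, g γ δ * (lam A (colH γ) * lam B (colA δ)
      + lam B (colH γ) * lam A (colA δ)) = lam B (colH α) := by
    calc _ = ∑ γ, ∑ δ, g γ δ * ((∑ A, ν A * lam A (colH γ)) * lam B (colA δ)
            + lam B (colH γ) * ∑ A, ν A * lam A (colA δ)) := by
          simp only [Finset.mul_sum, Finset.sum_mul, ← Finset.sum_add_distrib]
          rw [Finset.sum_comm]
          refine Finset.sum_congr rfl fun γ _ => ?_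
          rw [Finset.sum_comm]
          exact Finset.sum_congr rfl fun δ _ => Finset.sum_congr rfl fun A _ => by ring
      _ = ∑ γ, lam B (colH γ) * ∑ δ, ginv α δ * g γ δ := by
          simp only [hH, hA, Finset.mul_sum]
          exact Finset.sum_congr rfl fun γ _ => Finset.sum_congr rfl fun δ _ => by ring
      _ = lam B (colH α) := by simp [hginv]
  calc _ = (∑ A, ν A * ∑ γ, ∑ δ, g γ δ * (lam A (colH γ) * lam B (colA δ)
          + lam B (colH γ) * lam A (colA δ)))
        + (∑ A, ν A * lam A col0) * σ B + lam B col0 * (ν ⬝ᵥ σ) := by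
        rw [dotProduct, Finset.sum_mul, Finset.mul_sum _ _ (lam B col0),
          ← Finset.sum_add_distrib, ← Finset.sum_add_distrib]
        exact Finset.sum_congr rfl fun A _ => by ring
    _ = lam B (colH α) + lam B col0 * (ν ⬝ᵥ σ) := by rw [hS, h0, zero_mul, add_zero]

theorem snoc_vecMul_fefferman_eq_snoc {F : Matrix (Fin (2*n+1+1)) (Fin (2*n+1+1)) ℂ} {c : ℂ}
    (hc : c ≠ 0)
    (hF1 : ∀ A B : Fin (2*n+1), F A.castSucc B.castSucc
      = (∑ α, ∑ β, g α β * (lam A (colH α) * lam B (colA β)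
          + lam B (colH α) * lam A (colA β)))
        + lam A col0 * σ B + lam B col0 * σ A)
    (hF2 : ∀ A : Fin (2*n+1), F A.castSucc (Fin.last (2*n+1)) = lam A col0 / c)
    (hF3 : ∀ A : Fin (2*n+1), F (Fin.last (2*n+1)) A.castSucc = lam A col0 / c)
    (hF4 : F (Fin.last (2*n+1)) (Fin.last (2*n+1)) = 0)
    (hginv : ∀ α γ : Fin n, (∑ β, ginv α β * g γ β) = if α = γ then 1 else 0)
    (hν : ν ᵥ* lam = Sum.elim (0 : Unit → ℂ) (Sum.elim (0 : Fin n → ℂ) (ginv α))) :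
    Fin.snoc (α := fun _ => ℂ) ν (-c * (ν ⬝ᵥ σ)) ᵥ* F
      = Fin.snoc (α := fun _ => ℂ) (fun A => lam A (colH α)) 0 := by
  funext j
  induction j using Fin.lastCases with
  | last =>
    have h0 : ∑ A, ν A * lam A col0 = 0 := congrFun hν col0
    simp only [vecMul, dotProduct, Fin.sum_univ_castSucc, Fin.snoc_castSucc, Fin.snoc_last,
      hF2, hF4, mul_zero, add_zero, mul_div_assoc', ← Finset.sum_div, h0, zero_div]
  | cast B =>
    simp only [vecMul, dotProduct, Fin.sum_univ_castSucc, Fin.snoc_castSucc, Fin.snoc_last, hF1,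
      hF3, sum_mul_fefferman_entry_eq hginv hν B]
    field_simp
    ring
end

theorem fefferman_inverse_recovers_inverse_levi_general (n : ℕ)
    (g : Matrix (Fin n) (Fin n) ℂ)
    (lam : Matrix (Fin (2*n+1)) (FefCol n) ℂ)
    (hlam : ∃ mu : Matrix (FefCol n) (Fin (2*n+1)) ℂ, lam * mu = 1 ∧ mu * lam = 1)
    (σ : Fin (2*n+1) → ℂ)
    (F : Matrix (Fin (2*n+1+1)) (Fin (2*n+1+1)) ℂ)
    (hF1 : ∀ A B : Fin (2*n+1), F A.castSucc B.castSucc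
      = (∑ α, ∑ β, g α β * (lam A (colH α) * lam B (colA β)
          + lam B (colH α) * lam A (colA β)))
        + lam A col0 * σ B + lam B col0 * σ A)
    (hF2 : ∀ A : Fin (2*n+1), F A.castSucc (Fin.last (2*n+1)) = lam A col0 / ((n : ℂ) + 2))
    (hF3 : ∀ A : Fin (2*n+1), F (Fin.last (2*n+1)) A.castSucc = lam A col0 / ((n : ℂ) + 2))
    (hF4 : F (Fin.last (2*n+1)) (Fin.last (2*n+1)) = 0)
    (hFinv : IsUnit F)
    (ginv : Matrix (Fin n) (Fin n) ℂ)
    (hginv : ∀ α γ : Fin n, (∑ β, ginv α β * g γ β) = if α = γ then 1 else 0)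
    (α β : Fin n) :
    (∑ A : Fin (2*n+1), ∑ B : Fin (2*n+1),
        F⁻¹ A.castSucc B.castSucc * lam A (colH α) * lam B (colA β)) = ginv α β
    ∧ (∑ A : Fin (2*n+1), ∑ B : Fin (2*n+1),
        F⁻¹ A.castSucc B.castSucc * lam A (colH α) * lam B (colH β)) = 0 := by
  obtain ⟨mu, -, hmu⟩ := hlam
  set θ : FefCol n → ℂ := Sum.elim 0 (Sum.elim 0 (ginv α))
  have hν : (θ ᵥ* mu) ᵥ* lam = θ := by rw [vecMul_vecMul, hmu, vecMul_one]
  have hc : (n : ℂ) + 2 ≠ 0 := by exact_mod_cast (n + 1).succ_ne_zero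
  have hw := vecMul_inv_eq_of_vecMul_eq hFinv
    (snoc_vecMul_fefferman_eq_snoc hc hF1 hF2 hF3 hF4 hginv hν)
  have hpair : ∀ q, ∑ A, ∑ B, F⁻¹ A.castSucc B.castSucc * lam A (colH α) * lam B q = θ q := by
    intro q
    simp only [sum_sum_castSucc_mul_eq_sum_snoc_vecMul, hw, Fin.snoc_castSucc]
    exact congrFun hν q
  exact ⟨hpair (colA β), hpair (colH β)⟩

theorem fefferman_inverse_recovers_inverse_levi (n : ℕ) (hn : 1 ≤ n)
    (g : Matrix (Fin n) (Fin n) ℂ) (hg : IsUnit g)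
    (lam : Matrix (Fin (2*n+1)) (FefCol n) ℂ)
    (hlam : ∃ mu : Matrix (FefCol n) (Fin (2*n+1)) ℂ, lam * mu = 1 ∧ mu * lam = 1)
    (σ : Fin (2*n+1) → ℂ)
    (F : Matrix (Fin (2*n+1+1)) (Fin (2*n+1+1)) ℂ)
    (hF1 : ∀ A B : Fin (2*n+1), F A.castSucc B.castSucc
      = (∑ α, ∑ β, g α β * (lam A (colH α) * lam B (colA β)
          + lam B (colH α) * lam A (colA β)))
        + lam A col0 * σ B + lam B col0 * σ A)
    (hF2 : ∀ A : Fin (2*n+1), F A.castSucc (Fin.last (2*n+1)) = lam A col0 / ((n : ℂ) + 2))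
    (hF3 : ∀ A : Fin (2*n+1), F (Fin.last (2*n+1)) A.castSucc = lam A col0 / ((n : ℂ) + 2))
    (hF4 : F (Fin.last (2*n+1)) (Fin.last (2*n+1)) = 0)
    (hFinv : IsUnit F)
    (ginv : Matrix (Fin n) (Fin n) ℂ)
    (hginv : ∀ α γ : Fin n, (∑ β, ginv α β * g γ β) = if α = γ then 1 else 0)
    (α β : Fin n) :
    (∑ A : Fin (2*n+1), ∑ B : Fin (2*n+1),
        F⁻¹ A.castSucc B.castSucc * lam A (colH α) * lam B (colA β)) = ginv α β
    ∧ (∑ A : Fin (2*n+1), ∑ B : Fin (2*n+1),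
        F⁻¹ A.castSucc B.castSucc * lam A (colH α) * lam B (colH β)) = 0 :=
  fefferman_inverse_recovers_inverse_levi_general n g lam hlam σ F hF1 hF2 hF3 hF4 hFinv ginv hginv
    α β
end

section
/- Let μ be the inverse of λ, i.e. the unique family of complex numbers μ^A_D (A ∈ {0,…,2n}, D ranging over the column symbols 0, α, ᾱ) satisfying Σ_D λ^D_C μ^A_D = δ^A_C for all A, C ∈ {0,…,2n}. Then μ is given explicitly in terms of the inverse of F by: μ^A_0 = (1/(n+2)) F^{A,2n+2} + Σ_{B=0}^{2n} F^{AB} σ_B, μ^A_α = Σ_{B=0}^{2n} Σ_{β=1}^{n} F^{AB} g_{αβ̄} λ^{β̄}_B, and μ^A_{β̄} = Σ_{B=0}^{2n} Σ_{α=1}^{n} F^{AB} g_{αβ̄} λ^α_B. -/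
open scoped Matrix

/-!
Write `P = F⁻¹` and `c = 1/(n+2)`. The matrix `F` is bordered:
`F = [[N λᵀ + λ⁰ σᵀ, c λ⁰], [c λ⁰ᵀ, 0]]`, where `λ⁰` is the `0`-column of `λ` and `N` is `λ`
with its column index lowered by `g`, completed by `σ` in the `0`-column. The last column of
`P F = 1` gives `P₁₁ λ⁰ = 0`; with this, the upper-left block of `P F = 1` says exactly that
`μ = (P₁₁ N + c P₁₂ e₀ᵀ)ᵀ` is a right inverse of `λ`. A one-sided inverse of a square matrix is
two-sided, so it is the inverse given in `hmu`.
-/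

open Matrix

section BorderedInverse

variable {R : Type*} [Field R] {m : ℕ} {κ : Type*} [Fintype κ] [DecidableEq κ]
  {F P : Matrix (Fin (m + 1)) (Fin (m + 1)) R}

theorem sum_castSucc_mul_eq_zero_of_mul_eq_one (hPF : P * F = 1)
    (hlast : F (Fin.last m) (Fin.last m) = 0) {w : Fin m → R} {c : R} (hc : c ≠ 0)
    (hcol : ∀ A, F A.castSucc (Fin.last m) = c * w A) (A : Fin m) :
    ∑ B, P A.castSucc B.castSucc * w B = 0 := by
  have h := congrFun (congrFun hPF A.castSucc) (Fin.last m)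
  rw [mul_apply, Fin.sum_univ_castSucc, hlast, mul_zero, add_zero,
    one_apply_ne (Fin.castSucc_lt_last A).ne] at h
  simp only [hcol, mul_left_comm _ c, ← Finset.mul_sum] at h
  exact (mul_eq_zero.mp h).resolve_left hc

theorem sum_castSucc_mul_castSucc_of_mul_eq_one (hPF : P * F = 1) (A C : Fin m) :
    ∑ B : Fin m, P A.castSucc B.castSucc * F B.castSucc C.castSucc
      = (if A = C then 1 else 0) - P A.castSucc (Fin.last m) * F (Fin.last m) C.castSucc := by
  have h := congrFun (congrFun hPF A.castSucc) C.castSucc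
  rw [mul_apply, Fin.sum_univ_castSucc, one_apply] at h
  simp only [Fin.castSucc_inj] at h
  rw [← h, add_sub_cancel_right]

/-- For `P = F⁻¹` and `F = [[N Lᵀ + (L e_d) σᵀ, c L e_d], [c (L e_d)ᵀ, 0]]` this is
`(P₁₁ N + c P₁₂ e_dᵀ)ᵀ`, the right inverse of `L` produced by `mul_borderedRightInv_eq_one`. -/
def borderedRightInv (P : Matrix (Fin (m + 1)) (Fin (m + 1)) R) (N : Matrix (Fin m) κ R)
    (d : κ) (c : R) : Matrix κ (Fin m) R :=
  of fun D A => ∑ B, P A.castSucc B.castSucc * N B D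
    + if D = d then c * P A.castSucc (Fin.last m) else 0

theorem mul_borderedRightInv_eq_one (hPF : P * F = 1) {L N : Matrix (Fin m) κ R}
    {σ : Fin m → R} {d : κ} {c : R} (hc : c ≠ 0)
    (hblock : ∀ A B, F A.castSucc B.castSucc = (N * Lᵀ) A B + L A d * σ B)
    (hcol : ∀ A, F A.castSucc (Fin.last m) = c * L A d)
    (hrow : ∀ A, F (Fin.last m) A.castSucc = c * L A d)
    (hlast : F (Fin.last m) (Fin.last m) = 0) :
    L * borderedRightInv P N d c = 1 := by
  ext C A
  have hzero := sum_castSucc_mul_eq_zero_of_mul_eq_one hPF hlast hc hcol A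
  have hid := sum_castSucc_mul_castSucc_of_mul_eq_one hPF A C
  simp only [hblock, hrow, mul_add, Finset.sum_add_distrib, ← mul_assoc, ← Finset.sum_mul,
    hzero, zero_mul, add_zero] at hid
  calc (L * borderedRightInv P N d c) C A
      = ∑ B, P A.castSucc B.castSucc * (N * Lᵀ) B C
        + c * P A.castSucc (Fin.last m) * L C d := by
        simp only [mul_apply, borderedRightInv, of_apply, transpose_apply, mul_add,
          Finset.sum_add_distrib, Finset.mul_sum, mul_ite, mul_zero, Finset.sum_ite_eq',
          Finset.mem_univ, if_true]
        rw [Finset.sum_comm]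
        congr 1
        · exact Finset.sum_congr rfl fun B _ => Finset.sum_congr rfl fun D _ => by ring
        · ring
    _ = (1 : Matrix (Fin m) (Fin m) R) C A := by
        simp only [one_apply, @eq_comm _ C A]
        linear_combination hid

end BorderedInverse

theorem eq_of_mul_eq_one_of_card_eq {m n R : Type*} [Fintype m] [Fintype n] [DecidableEq m]
    [DecidableEq n] [CommRing R] {A : Matrix m n R} {B C : Matrix n m R}
    (hcard : Fintype.card m = Fintype.card n) (hB : A * B = 1) (hC : A * C = 1) : B = C := by
  calc B = B * (A * C) := by rw [hC, Matrix.mul_one]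
    _ = (B * A) * C := (Matrix.mul_assoc _ _ _).symm
    _ = C := by rw [(mul_eq_one_comm_of_card_eq _ _ _ hcard).mp hB, Matrix.one_mul]

theorem colH_ne_col0 {n : ℕ} (α : Fin n) : colH α ≠ col0 := Sum.inr_ne_inl

theorem colA_ne_col0 {n : ℕ} (α : Fin n) : colA α ≠ col0 := Sum.inr_ne_inl

theorem sum_fefCol {M : Type*} [AddCommMonoid M] {n : ℕ} (f : FefCol n → M) :
    ∑ D, f D = f col0 + ∑ α, f (colH α) + ∑ α, f (colA α) := by
  simp [Fintype.sum_sum_type, col0, colH, colA, add_assoc]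

section Pairing

variable {R ι : Type*} [CommRing R] {n : ℕ} (g : Matrix (Fin n) (Fin n) R)
  (lam : Matrix ι (FefCol n) R)

def fefPairing : Matrix (FefCol n) (FefCol n) R :=
  fromBlocks 0 0 0 (fromBlocks 0 g gᵀ 0)

theorem mul_fefPairing_col0 (B : ι) : (lam * fefPairing g) B col0 = 0 := by
  simp [fefPairing, col0, mul_apply]

theorem mul_fefPairing_colH (B : ι) (α : Fin n) :
    (lam * fefPairing g) B (colH α) = ∑ β, g α β * lam B (colA β) := by
  simp [fefPairing, colH, colA, mul_apply, mul_comm]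

theorem mul_fefPairing_colA (B : ι) (β : Fin n) :
    (lam * fefPairing g) B (colA β) = ∑ α, g α β * lam B (colH α) := by
  simp [fefPairing, colH, colA, mul_apply, mul_comm]

theorem mul_fefPairing_mul_transpose_apply [Fintype ι] (A B : ι) :
    (lam * fefPairing g * lamᵀ) A B
      = ∑ α, ∑ β, g α β * (lam A (colH α) * lam B (colA β) + lam B (colH α) * lam A (colA β)) := by
  simp only [mul_apply (M := lam * fefPairing g), sum_fefCol, mul_fefPairing_col0,
    mul_fefPairing_colH, mul_fefPairing_colA]
  simp only [transpose_apply, zero_mul, zero_add, Finset.sum_mul, mul_add, Finset.sum_add_distrib]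
  rw [add_comm]
  congr 1
  · rw [Finset.sum_comm]
    exact Finset.sum_congr rfl fun α _ => Finset.sum_congr rfl fun β _ => by ring
  · exact Finset.sum_congr rfl fun α _ => Finset.sum_congr rfl fun β _ => by ring

end Pairing

section LoweredFrame

variable {R ι : Type*} [CommRing R] {n : ℕ} (g : Matrix (Fin n) (Fin n) R)
  (lam : Matrix ι (FefCol n) R) (σ : ι → R)

def loweredFrame : Matrix ι (FefCol n) R :=
  lam * fefPairing g + vecMulVec σ (Pi.single col0 1)

theorem loweredFrame_col0 (B : ι) : loweredFrame g lam σ B col0 = σ B := by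
  rw [loweredFrame, Matrix.add_apply, mul_fefPairing_col0, vecMulVec_apply, Pi.single_eq_same,
    zero_add, mul_one]

theorem loweredFrame_colH (B : ι) (α : Fin n) :
    loweredFrame g lam σ B (colH α) = ∑ β, g α β * lam B (colA β) := by
  rw [loweredFrame, Matrix.add_apply, mul_fefPairing_colH, vecMulVec_apply,
    Pi.single_eq_of_ne (colH_ne_col0 α), mul_zero, add_zero]

theorem loweredFrame_colA (B : ι) (β : Fin n) :
    loweredFrame g lam σ B (colA β) = ∑ α, g α β * lam B (colH α) := by
  rw [loweredFrame, Matrix.add_apply, mul_fefPairing_colA, vecMulVec_apply,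
    Pi.single_eq_of_ne (colA_ne_col0 β), mul_zero, add_zero]

theorem loweredFrame_mul_transpose_apply_add [Fintype ι] (A B : ι) :
    (loweredFrame g lam σ * lamᵀ) A B + lam A col0 * σ B
      = (∑ α, ∑ β, g α β * (lam A (colH α) * lam B (colA β) + lam B (colH α) * lam A (colA β)))
        + lam A col0 * σ B + lam B col0 * σ A := by
  rw [loweredFrame, Matrix.add_mul, Matrix.add_apply, mul_fefPairing_mul_transpose_apply,
    vecMulVec_mul, vecMulVec_apply, single_one_vecMul, row_apply, transpose_apply]
  ring

end LoweredFrame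

theorem lambda_inverse_via_fefferman_inverse_general (n : ℕ)
    (g : Matrix (Fin n) (Fin n) ℂ)
    (lam : Matrix (Fin (2*n+1)) (FefCol n) ℂ)
    (σ : Fin (2*n+1) → ℂ)
    (F : Matrix (Fin (2*n+1+1)) (Fin (2*n+1+1)) ℂ)
    (hF1 : ∀ A B : Fin (2*n+1), F A.castSucc B.castSucc
      = (∑ α, ∑ β, g α β * (lam A (colH α) * lam B (colA β)
          + lam B (colH α) * lam A (colA β)))
        + lam A col0 * σ B + lam B col0 * σ A)
    (hF2 : ∀ A : Fin (2*n+1), F A.castSucc (Fin.last (2*n+1)) = lam A col0 / ((n : ℂ) + 2))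
    (hF3 : ∀ A : Fin (2*n+1), F (Fin.last (2*n+1)) A.castSucc = lam A col0 / ((n : ℂ) + 2))
    (hF4 : F (Fin.last (2*n+1)) (Fin.last (2*n+1)) = 0)
    (hFinv : IsUnit F)
    (mu : Fin (2*n+1) → FefCol n → ℂ)
    (hmu : ∀ A C : Fin (2*n+1),
      (∑ D : FefCol n, lam C D * mu A D) = if A = C then 1 else 0)
    (A : Fin (2*n+1)) :
    (mu A col0 = (1 / ((n : ℂ) + 2)) * F⁻¹ A.castSucc (Fin.last (2*n+1))
        + ∑ B : Fin (2*n+1), F⁻¹ A.castSucc B.castSucc * σ B)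
    ∧ (∀ α : Fin n, mu A (colH α)
        = ∑ B : Fin (2*n+1), ∑ β : Fin n,
            F⁻¹ A.castSucc B.castSucc * g α β * lam B (colA β))
    ∧ (∀ β : Fin n, mu A (colA β)
        = ∑ B : Fin (2*n+1), ∑ α : Fin n,
            F⁻¹ A.castSucc B.castSucc * g α β * lam B (colH α)) := by
  set c : ℂ := 1 / ((n : ℂ) + 2) with hc_def
  have hc : c ≠ 0 := one_div_ne_zero (by exact_mod_cast Nat.succ_ne_zero (n + 1))
  have hdiv (A) : lam A col0 / ((n : ℂ) + 2) = c * lam A col0 := by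
    rw [hc_def, mul_comm, ← div_eq_mul_one_div]
  set M := borderedRightInv F⁻¹ (loweredFrame g lam σ) col0 c
  have hright : lam * M = 1 :=
    mul_borderedRightInv_eq_one (nonsing_inv_mul F ((isUnit_iff_isUnit_det F).mp hFinv)) hc
      (fun A B => by rw [hF1, loweredFrame_mul_transpose_apply_add])
      (fun A => (hF2 A).trans (hdiv A)) (fun A => (hF3 A).trans (hdiv A)) hF4
  have hmu_right : lam * (of mu)ᵀ = 1 := by
    ext C A
    rw [mul_apply, one_apply]
    simpa [@eq_comm _ C A] using hmu A C
  have hcard : Fintype.card (Fin (2 * n + 1)) = Fintype.card (FefCol n) := by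
    simp only [Fintype.card_fin, Fintype.card_sum, Fintype.card_unit]
    ring
  have hval (D) : mu A D = M D A :=
    congrFun (congrFun (eq_of_mul_eq_one_of_card_eq hcard hmu_right hright) D) A
  refine ⟨?_, fun α => ?_, fun β => ?_⟩ <;>
    simp only [hval, M, borderedRightInv, of_apply, loweredFrame_col0, loweredFrame_colH,
      loweredFrame_colA, if_neg (colH_ne_col0 _), if_neg (colA_ne_col0 _), add_zero,
      Finset.mul_sum, mul_assoc]
  exact add_comm _ _

theorem lambda_inverse_via_fefferman_inverse (n : ℕ) (hn : 1 ≤ n)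
    (g : Matrix (Fin n) (Fin n) ℂ) (hg : IsUnit g)
    (lam : Matrix (Fin (2*n+1)) (FefCol n) ℂ)
    (hlam : ∃ mu : Matrix (FefCol n) (Fin (2*n+1)) ℂ, lam * mu = 1 ∧ mu * lam = 1)
    (σ : Fin (2*n+1) → ℂ)
    (F : Matrix (Fin (2*n+1+1)) (Fin (2*n+1+1)) ℂ)
    (hF1 : ∀ A B : Fin (2*n+1), F A.castSucc B.castSucc
      = (∑ α, ∑ β, g α β * (lam A (colH α) * lam B (colA β)
          + lam B (colH α) * lam A (colA β)))
        + lam A col0 * σ B + lam B col0 * σ A)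
    (hF2 : ∀ A : Fin (2*n+1), F A.castSucc (Fin.last (2*n+1)) = lam A col0 / ((n : ℂ) + 2))
    (hF3 : ∀ A : Fin (2*n+1), F (Fin.last (2*n+1)) A.castSucc = lam A col0 / ((n : ℂ) + 2))
    (hF4 : F (Fin.last (2*n+1)) (Fin.last (2*n+1)) = 0)
    (hFinv : IsUnit F)
    (mu : Fin (2*n+1) → FefCol n → ℂ)
    (hmu : ∀ A C : Fin (2*n+1),
      (∑ D : FefCol n, lam C D * mu A D) = if A = C then 1 else 0)
    (A : Fin (2*n+1)) :
    (mu A col0 = (1 / ((n : ℂ) + 2)) * F⁻¹ A.castSucc (Fin.last (2*n+1))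
        + ∑ B : Fin (2*n+1), F⁻¹ A.castSucc B.castSucc * σ B)
    ∧ (∀ α : Fin n, mu A (colH α)
        = ∑ B : Fin (2*n+1), ∑ β : Fin n,
            F⁻¹ A.castSucc B.castSucc * g α β * lam B (colA β))
    ∧ (∀ β : Fin n, mu A (colA β)
        = ∑ B : Fin (2*n+1), ∑ α : Fin n,
            F⁻¹ A.castSucc B.castSucc * g α β * lam B (colH α)) :=
  lambda_inverse_via_fefferman_inverse_general n g lam σ F hF1 hF2 hF3 hF4 hFinv mu hmu A
end
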